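/- Let h₁, h₂ ∈ ℍ with Re h₁ = Re h₂ = 0 and |h₁| = |h₂| = 1, and define the linear map f₁ on m by f₁(x, y, z) = (h₁x, h₂y, 0). Then the off-diagonal projection [f₁X, f₁²X]_m vanishes for all X ∈ m if and only if h₁ = −h₂. -/

import Mathlib

/-!
A purely imaginary unit quaternion squares to `-1`, so `f₁² = -1` on `m₁ ⊕ m₂`. For
`X = (x, y, z)` the only off-diagonal entry of `[f₁X, f₁²X]` is then, using `h̄₁ = -h₁`,
the `m₃`-coordinate `-x̄ (h₁ + h₂) y`, which vanishes for all `x, y` iff `h₁ + h₂ = 0`.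
-/

open Quaternion

namespace Sp3

/-- `M₁(x) ∈ sp(3)` has entry `x` in position `(1,2)`, `−x̄` in position `(2,1)`, zeros
elsewhere (indices `0,1,2` correspond to the paper's `1,2,3`). -/
noncomputable def M1 (x : ℍ[ℝ]) : Matrix (Fin 3) (Fin 3) ℍ[ℝ] :=
  Matrix.single 0 1 x - Matrix.single 1 0 (star x)

/-- `M₂(y) ∈ sp(3)` has entry `y` in position `(1,3)`, `−ȳ` in position `(3,1)`. -/
noncomputable def M2 (y : ℍ[ℝ]) : Matrix (Fin 3) (Fin 3) ℍ[ℝ] :=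
  Matrix.single 0 2 y - Matrix.single 2 0 (star y)

/-- `M₃(z) ∈ sp(3)` has entry `z` in position `(2,3)`, `−z̄` in position `(3,2)`. -/
noncomputable def M3 (z : ℍ[ℝ]) : Matrix (Fin 3) (Fin 3) ℍ[ℝ] :=
  Matrix.single 1 2 z - Matrix.single 2 1 (star z)

/-- Membership in `h ⊂ sp(3)`: the diagonal matrices whose diagonal entries are purely
imaginary quaternions. -/
def InH (X : Matrix (Fin 3) (Fin 3) ℍ[ℝ]) : Prop :=
  (∀ i j : Fin 3, i ≠ j → X i j = 0) ∧ (∀ i : Fin 3, (X i i).re = 0)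

/-- The element of `m = m₁ ⊕ m₂ ⊕ m₃` with coordinates `(x, y, z) ∈ ℍ³`. -/
noncomputable def Mm (v : ℍ[ℝ] × ℍ[ℝ] × ℍ[ℝ]) : Matrix (Fin 3) (Fin 3) ℍ[ℝ] :=
  M1 v.1 + M2 v.2.1 + M3 v.2.2

/-- The off-diagonal part of `X`, i.e. the projection of `X ∈ sp(3)` onto `m` along `h`. -/
noncomputable def offDiag (X : Matrix (Fin 3) (Fin 3) ℍ[ℝ]) : Matrix (Fin 3) (Fin 3) ℍ[ℝ] :=
  Matrix.of fun i j => if i = j then 0 else X i j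

end Sp3

theorem Quaternion.sq_eq_neg_one_of_re_eq_zero {h : ℍ[ℝ]} (hre : h.re = 0) (hn : ‖h‖ = 1) :
    h ^ 2 = -1 := by
  rw [Quaternion.sq_eq_neg_normSq.mpr hre, Quaternion.normSq_eq_norm_mul_self, hn]
  simp

namespace Sp3

theorem M3_eq_zero_iff {z : ℍ[ℝ]} : M3 z = 0 ↔ z = 0 := by
  refine ⟨fun h => ?_, fun h => by simp [h, M3]⟩
  simpa [M3, Matrix.single] using congrFun (congrFun h 1) 2

theorem offDiag_lie_Mm (a b c d : ℍ[ℝ]) :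
    offDiag ⁅Mm (a, b, 0), Mm (c, d, 0)⁆ = M3 (star c * b - star a * d) := by
  refine Matrix.ext fun i j => ?_
  rw [Ring.lie_def]
  fin_cases i <;> fin_cases j <;>
    simp [Mm, M1, M2, M3, offDiag, Matrix.mul_apply, Fin.sum_univ_three, Matrix.single] <;>
    abel

end Sp3

open Sp3 in
/-- let `h₁, h₂ ∈ ℍ` be purely imaginary unit quaternions and let `f₁` act
on `m` in coordinates by `f₁(x, y, z) = (h₁x, h₂y, 0)`.  Then the off-diagonal projection
`[f₁X, f₁²X]_m` vanishes for all `X ∈ m` if and only if `h₁ = −h₂`. -/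
theorem statement16 (h1 h2 : ℍ[ℝ]) (h1re : h1.re = 0) (h2re : h2.re = 0)
    (h1n : ‖h1‖ = 1) (h2n : ‖h2‖ = 1)
    (f : ℍ[ℝ] × ℍ[ℝ] × ℍ[ℝ] → ℍ[ℝ] × ℍ[ℝ] × ℍ[ℝ])
    (hf : ∀ v, f v = (h1 * v.1, h2 * v.2.1, 0)) :
    (∀ v : ℍ[ℝ] × ℍ[ℝ] × ℍ[ℝ], offDiag ⁅Mm (f v), Mm (f (f v))⁆ = 0) ↔ h1 = -h2 := by
  have hff (v : ℍ[ℝ] × ℍ[ℝ] × ℍ[ℝ]) : f (f v) = (-v.1, -v.2.1, 0) := by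
    simp only [hf, ← mul_assoc, ← sq, Quaternion.sq_eq_neg_one_of_re_eq_zero h1re h1n,
      Quaternion.sq_eq_neg_one_of_re_eq_zero h2re h2n, neg_one_mul]
  have hlie (v : ℍ[ℝ] × ℍ[ℝ] × ℍ[ℝ]) :
      offDiag ⁅Mm (f v), Mm (f (f v))⁆ = M3 (-(star v.1 * (h1 + h2) * v.2.1)) := by
    rw [hff, hf, offDiag_lie_Mm, star_neg, star_mul, Quaternion.star_eq_neg.mpr h1re]
    noncomm_ring
  simp only [hlie, M3_eq_zero_iff, neg_eq_zero, ← add_eq_zero_iff_eq_neg]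
  exact ⟨fun h => by simpa using h (1, 1, 0), fun h v => by simp [h]⟩
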